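/- The composition of two compression-expansion functions is a compression-expansion function. -/

import Mathlib

/-- `x` is an expansion of `y`: `x = y₁^{α₁} ⋯ y_m^{α_m}` for positive integers `αᵢ`. -/
def IsExpansion {A : Type*} (x y : List A) : Prop :=
  ∃ ns : List ℕ, ns.length = y.length ∧ (∀ k ∈ ns, 0 < k) ∧
    x = (List.zipWith (fun a k => List.replicate k a) y ns).flatten

/-- A word is irreducible if it has no two equal consecutive elements. -/
def IrreducibleWord {A : Type*} (x : List A) : Prop :=
  List.Chain' (· ≠ ·) x

/-- `f` is a compression-expansion function: every `x` has a common compression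
with `f x`. -/
def IsCoEx {A : Type*} (f : List A → List A) : Prop :=
  ∀ x : List A, ∃ z : List A, IsExpansion x z ∧ IsExpansion (f x) z

section Aux
variable {A : Type*}

inductive Exp : List A → List A → Prop
  | nil : Exp [] []
  | cons (n : ℕ) (a : A) {x y : List A} (hn : 0 < n) (h : Exp x y) :
      Exp (List.replicate n a ++ x) (a :: y)

lemma exp_nil {x : List A} (h : Exp x ([] : List A)) : x = [] := by
  cases h; rfl

lemma exp_cons {x : List A} {a : A} {y : List A} (h : Exp x (a :: y)) :
    ∃ n x', 0 < n ∧ Exp x' y ∧ x = List.replicate n a ++ x' := by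
  cases h with
  | cons n a hn h => exact ⟨n, _, hn, h, rfl⟩

lemma exp_append {x u v : List A} (h : Exp x (u ++ v)) :
    ∃ x1 x2, x = x1 ++ x2 ∧ Exp x1 u ∧ Exp x2 v := by
  induction u generalizing x with
  | nil => exact ⟨[], x, rfl, Exp.nil, h⟩
  | cons a u ih =>
    obtain ⟨n, x', hn, h', rfl⟩ := exp_cons h
    obtain ⟨x1, x2, rfl, h1, h2⟩ := ih h'
    exact ⟨List.replicate n a ++ x1, x2, by simp, Exp.cons n a hn h1, h2⟩

lemma exp_replicate {x : List A} {n : ℕ} {a : A} (hn : 0 < n)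
    (h : Exp x (List.replicate n a)) : ∃ m, 0 < m ∧ x = List.replicate m a := by
  induction n generalizing x with
  | zero => omega
  | succ n ih =>
    rw [List.replicate_succ] at h
    obtain ⟨k, x', hk, h', rfl⟩ := exp_cons h
    rcases Nat.eq_zero_or_pos n with rfl | hn'
    · simp only [List.replicate_zero] at h'
      rw [exp_nil h']
      exact ⟨k, hk, by simp⟩
    · obtain ⟨m, hm, rfl⟩ := ih hn' h'
      exact ⟨k + m, by omega, by rw [List.replicate_add]⟩

lemma exp_trans {x y z : List A} (h1 : Exp x y) (h2 : Exp y z) : Exp x z := by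
  induction h2 generalizing x with
  | nil => rw [exp_nil h1]; exact Exp.nil
  | cons n a hn h ih =>
    obtain ⟨x1, x2, rfl, hx1, hx2⟩ := exp_append h1
    obtain ⟨m, hm, rfl⟩ := exp_replicate hn hx1
    exact Exp.cons m a hm (ih hx2)

lemma isExpansion_iff_exp {x y : List A} : IsExpansion x y ↔ Exp x y := by
  constructor
  · rintro ⟨ns, hlen, hpos, rfl⟩
    induction y generalizing ns with
    | nil =>
      simp only [List.length_nil, List.length_eq_zero_iff] at hlen
      subst hlen
      exact Exp.nil
    | cons a y ih =>
      match ns with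
      | n :: ns =>
        simp only [List.length_cons, Nat.succ.injEq] at hlen
        have := ih ns hlen (fun k hk => hpos k (List.mem_cons_of_mem _ hk))
        simpa using Exp.cons n a (hpos n List.mem_cons_self) this
  · intro h
    induction h with
    | nil => exact ⟨[], rfl, by simp, rfl⟩
    | cons n a hn h ih =>
      obtain ⟨ns, hlen, hpos, rfl⟩ := ih
      refine ⟨n :: ns, by simp [hlen], ?_, by simp⟩
      intro k hk
      rcases List.mem_cons.1 hk with rfl | hk'
      · exact hn
      · exact hpos k hk'

open Classical in
/-- The condensed form of a word: collapse runs of equal letters. -/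
noncomputable def condense : List A → List A
  | [] => []
  | [a] => [a]
  | a :: b :: l => if a = b then condense (b :: l) else a :: condense (b :: l)

lemma cond_nil : condense ([] : List A) = [] := rfl

lemma cond_singleton (a : A) : condense [a] = [a] := rfl

open Classical in
lemma cond_cons_cons (a b : A) (l : List A) :
    condense (a :: b :: l) = if a = b then condense (b :: l) else a :: condense (b :: l) := rfl

lemma cond_head : ∀ (b : A) (l : List A), (condense (b :: l)).head? = some b
  | b, [] => rfl
  | b, c :: l => by
    rw [cond_cons_cons]
    split
    · rename_i hbc; rw [cond_head c l, hbc]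
    · rfl

open Classical in
lemma cond_cons (a : A) (l : List A) :
    condense (a :: l) = if (condense l).head? = some a then condense l else a :: condense l := by
  cases l with
  | nil => simp [cond_singleton, cond_nil]
  | cons b l =>
    rw [cond_cons_cons, cond_head b l]
    by_cases h : a = b <;> simp [h, eq_comm]

lemma cond_double (a : A) (l : List A) : condense (a :: a :: l) = condense (a :: l) := by
  rw [cond_cons_cons, if_pos rfl]

lemma cond_replicate_append {n : ℕ} (hn : 0 < n) (a : A) (l : List A) :
    condense (List.replicate n a ++ l) = condense (a :: l) := by
  induction n with
  | zero => omega
  | succ n ih =>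
    rcases Nat.eq_zero_or_pos n with rfl | hn'
    · simp
    · rw [List.replicate_succ, List.cons_append,
        show List.replicate n a ++ l = a :: (List.replicate (n-1) a ++ l) by
          cases n with
          | zero => omega
          | succ m => simp [List.replicate_succ],
        cond_double,
        ← show List.replicate n a ++ l = a :: (List.replicate (n-1) a ++ l) by
          cases n with
          | zero => omega
          | succ m => simp [List.replicate_succ],
        ih hn']

lemma exp_cond_eq {x y : List A} (h : Exp x y) : condense x = condense y := by
  induction h with
  | nil => rfl
  | cons n a hn h ih =>
    rw [cond_replicate_append hn, cond_cons, cond_cons, ih]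

lemma exp_cond_self : ∀ x : List A, Exp x (condense x)
  | [] => Exp.nil
  | [a] => by
    rw [cond_singleton]
    simpa using Exp.cons 1 a Nat.one_pos Exp.nil
  | a :: b :: l => by
    have IH := exp_cond_self (b :: l)
    rw [cond_cons_cons]
    split
    · rename_i hab
      subst hab
      -- condense (a :: l) has head a
      obtain ⟨c, hc⟩ : ∃ c, condense (a :: l) = a :: c := by
        have := cond_head a l
        cases hcl : condense (a :: l) with
        | nil => rw [hcl] at this; simp at this
        | cons d c => rw [hcl] at this; simp at this; exact ⟨c, by rw [this]⟩
      rw [hc] at IH ⊢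
      obtain ⟨k, x', hk, h', hx⟩ := exp_cons IH
      have : a :: a :: l = List.replicate (k + 1) a ++ x' := by
        rw [List.replicate_succ, List.cons_append, ← hx]
      rw [this]
      exact Exp.cons (k + 1) a (by omega) h'
    · simpa using Exp.cons 1 a Nat.one_pos IH

end Aux

/-- The composition of two compression-expansion functions is a
compression-expansion function. -/
theorem coEx_comp {A : Type*} {g h : List A → List A}
    (hg : IsCoEx g) (hh : IsCoEx h) : IsCoEx (g ∘ h) := by
  intro x
  obtain ⟨z1, h1, h2⟩ := hh x
  obtain ⟨z2, h3, h4⟩ := hg (h x)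
  rw [isExpansion_iff_exp] at h1 h2 h3 h4
  refine ⟨condense (h x), ?_, ?_⟩ <;> rw [isExpansion_iff_exp]
  · exact exp_trans h1 (by rw [exp_cond_eq h2]; exact exp_cond_self z1)
  · exact exp_trans h4 (by rw [exp_cond_eq h3]; exact exp_cond_self z2)
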